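/- Let G be a finite simple graph and let μ(G) be its Mycielskian with root w. If there is an automorphism φ of μ(G) with φ(w) ≠ w, then G is isomorphic to the star K_{1,m} for some m ≥ 0. -/

import Mathlib

open SimpleGraph

universe u

/-- A distinguishing edge coloring: no nontrivial automorphism preserves the coloring. -/
def IsDistEdgeColoring {V : Type u} (G : SimpleGraph V) {C : Type*} (c : G.edgeSet → C) : Prop :=
  ∀ φ : G ≃g G, (∀ e : G.edgeSet, c (φ.mapEdgeSet e) = c e) → ∀ v, φ v = v

/-- The distinguishing index: least number of colors in a distinguishing edge coloring. -/
noncomputable def distIndex {V : Type u} (G : SimpleGraph V) : ℕ :=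
  sInf {k : ℕ | ∃ c : G.edgeSet → Fin k, IsDistEdgeColoring G c}

/-- The star `K_{1,m}` with center `0`. -/
def starGraph (m : ℕ) : SimpleGraph (Fin (m + 1)) :=
  SimpleGraph.fromRel fun a _ => a = 0

/-- The Mycielskian: `Sum.inl a` are original vertices, `Sum.inr (Sum.inl a)` their
shadows, and `Sum.inr (Sum.inr _)` the root. -/
def myc {V : Type u} (G : SimpleGraph V) : SimpleGraph (V ⊕ V ⊕ PUnit.{u+1}) :=
  SimpleGraph.fromRel fun x y =>
    match x, y with
    | Sum.inl a, Sum.inl b => G.Adj a b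
    | Sum.inl a, Sum.inr (Sum.inl b) => G.Adj a b
    | Sum.inr (Sum.inl _), Sum.inr (Sum.inr _) => True
    | _, _ => False

/-- The generalized Mycielskian with `t` extra levels: `Sum.inl (j, a)` is the level-`j`
copy of vertex `a` (level `0` being the original vertices), and `Sum.inr _` is the root. -/
def genMyc {V : Type u} (G : SimpleGraph V) (t : ℕ) :
    SimpleGraph ((Fin (t + 1) × V) ⊕ PUnit.{u+1}) :=
  SimpleGraph.fromRel fun x y =>
    match x, y with
    | Sum.inl (j, a), Sum.inl (k, b) =>
        ((j.val = 0 ∧ k.val = 0) ∨ k.val = j.val + 1) ∧ G.Adj a b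
    | Sum.inl (j, _), Sum.inr _ => j.val = t
    | _, _ => False

/-!
Automorphisms of `μ(G)` preserve degrees, and the root `w` has degree `|V|` and only shadows
as neighbours. Let `x = φ⁻¹(w) ≠ w`.

If `x = u_k`, then `deg k + 1 = |V|`, so `k` is adjacent to every other vertex; `φ` maps the
other original vertices to neighbours of `w`, i.e. to pairwise non-adjacent shadows, so they are
independent in `G`.

If `x = v_l`, then `φ(u_l)` is an original vertex `v_a` (it is neither `w` nor adjacent to `w`),
and every original neighbour of `v_a` must be `φ(w)`, so `deg a ≤ 1`. Comparing
`2 deg a = deg u_l = deg l + 1` and `2 deg l = deg v_l = |V|` gives `deg l = 1` and `|V| = 2`.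
-/

namespace SimpleGraph

variable {V W : Type*} {G : SimpleGraph V} {H : SimpleGraph W}

theorem Iso.ncard_neighborSet_eq (f : G ≃g H) (v : V) :
    (H.neighborSet (f v)).ncard = (G.neighborSet v).ncard := by
  simp only [← Nat.card_coe_set_eq]
  exact (Nat.card_congr (f.mapNeighborSet v)).symm

theorem isUniversal_of_ncard_neighborSet_add_one_eq [Finite V] {c : V}
    (hc : (G.neighborSet c).ncard + 1 = Nat.card V) : G.IsUniversal c := by
  refine IsUniversal.of_neighborSet_eq (Set.eq_of_subset_of_ncard_le
    (fun b hb => (G.ne_of_adj hb).symm) ?_)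
  rw [Set.ncard_compl, Set.ncard_singleton]
  omega

theorem eq_starGraph_of_isUniversal {c : V} (hc : G.IsUniversal c)
    (hind : ∀ a b, a ≠ c → b ≠ c → ¬ G.Adj a b) : G = starGraph c := by
  ext a b
  rw [starGraph_adj]
  refine ⟨fun hab => ⟨hab.ne, ?_⟩, ?_⟩
  · by_contra! h
    exact hind a b h.1 h.2 hab
  · rintro ⟨hab, rfl | rfl⟩
    · exact hc hab
    · exact (hc hab.symm).symm

theorem exists_iso_starGraph_fin [Finite V] (c : V) :
    ∃ m : ℕ, Nonempty (starGraph c ≃g _root_.starGraph m) := by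
  classical
  have := Fintype.ofFinite V
  let e : V ≃ Fin (Fintype.card {a // a ≠ c} + 1) :=
    (Equiv.optionSubtypeNe c).symm.trans
      ((Equiv.optionCongr (Fintype.equivFin _)).trans (finSuccEquiv _).symm)
  have he : ∀ a, e a = 0 ↔ a = c := by
    have : e c = 0 := by simp [e]
    intro a
    rw [← this, e.injective.eq_iff]
  exact ⟨_, ⟨e, fun {a b} => by
    change (starGraph 0).Adj (e a) (e b) ↔ _
    simp only [starGraph_adj, he, ne_eq, e.injective.eq_iff]⟩⟩

theorem exists_iso_starGraph_of_isUniversal [Finite V] {c : V} (hc : G.IsUniversal c)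
    (hind : ∀ a b, a ≠ c → b ≠ c → ¬ G.Adj a b) :
    ∃ m : ℕ, Nonempty (G ≃g _root_.starGraph m) := by
  rw [eq_starGraph_of_isUniversal hc hind]
  exact exists_iso_starGraph_fin c

end SimpleGraph

namespace myc

variable {V : Type*} {G : SimpleGraph V} {a b : V} {p : PUnit}

@[simp]
theorem adj_inl_inl : (myc G).Adj (.inl a) (.inl b) ↔ G.Adj a b := by
  simpa [myc, G.adj_comm] using G.ne_of_adj

@[simp]
theorem adj_inl_inr_inl : (myc G).Adj (.inl a) (.inr (.inl b)) ↔ G.Adj a b := by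
  simp [myc]

@[simp]
theorem adj_inr_inl_inl : (myc G).Adj (.inr (.inl a)) (.inl b) ↔ G.Adj b a := by
  simp [myc]

@[simp]
theorem adj_inr_inl_inr_inr : (myc G).Adj (.inr (.inl a)) (.inr (.inr p)) := by
  simp [myc]

@[simp]
theorem adj_inr_inr_inr_inl : (myc G).Adj (.inr (.inr p)) (.inr (.inl a)) := by
  simp [myc]

@[simp]
theorem not_adj_inr_inl_inr_inl : ¬ (myc G).Adj (.inr (.inl a)) (.inr (.inl b)) := by
  simp [myc]

@[simp]
theorem not_adj_inl_inr_inr : ¬ (myc G).Adj (.inl a) (.inr (.inr p)) := by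
  simp [myc]

@[simp]
theorem not_adj_inr_inr_inl : ¬ (myc G).Adj (.inr (.inr p)) (.inl a) := by
  simp [myc]

theorem neighborSet_inr_inr :
    (myc G).neighborSet (.inr (.inr .unit)) = Set.range (Sum.inr ∘ Sum.inl) := by
  ext x
  rcases x with x | x | _ <;> simp

theorem neighborSet_inr_inl (k : V) :
    (myc G).neighborSet (.inr (.inl k)) =
      insert (.inr (.inr .unit)) (Sum.inl '' G.neighborSet k) := by
  ext x
  rcases x with x | x | _ <;> simp [G.adj_comm]

theorem neighborSet_inl (a : V) :
    (myc G).neighborSet (.inl a) =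
      Sum.inl '' G.neighborSet a ∪ (Sum.inr ∘ Sum.inl) '' G.neighborSet a := by
  ext x
  rcases x with x | x | _ <;> simp

theorem exists_eq_inr_inl_of_adj_inr_inr {x : V ⊕ V ⊕ PUnit}
    (hx : (myc G).Adj (.inr (.inr .unit)) x) : ∃ i, x = .inr (.inl i) := by
  rw [← mem_neighborSet, neighborSet_inr_inr] at hx
  obtain ⟨i, rfl⟩ := hx
  exact ⟨i, rfl⟩

theorem ncard_neighborSet_inr_inr :
    ((myc G).neighborSet (.inr (.inr .unit))).ncard = Nat.card V := by
  rw [neighborSet_inr_inr, ← Set.image_univ, Set.ncard_image_of_injective _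
    (Sum.inr_injective.comp Sum.inl_injective), Set.ncard_univ]

theorem exists_apply_inr_inl_eq_inl_of_apply_inl_eq_inr_inr (ψ : myc G ≃g myc G) {l : V}
    (hl : ψ (.inl l) = .inr (.inr .unit)) : ∃ a, ψ (.inr (.inl l)) = .inl a := by
  rcases ht : ψ (.inr (.inl l)) with a | i | _
  · exact ⟨a, rfl⟩
  · have := ψ.map_adj_iff.mp (hl ▸ ht ▸ adj_inr_inl_inr_inr)
    exact absurd this (by simp)
  · exact absurd (ψ.injective (hl.trans ht.symm)) (by simp)

variable [Finite V]

theorem ncard_neighborSet_inr_inl (k : V) :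
    ((myc G).neighborSet (.inr (.inl k))).ncard = (G.neighborSet k).ncard + 1 := by
  rw [neighborSet_inr_inl, Set.ncard_insert_of_notMem (by simp),
    Set.ncard_image_of_injective _ Sum.inl_injective]

theorem ncard_neighborSet_inl (a : V) :
    ((myc G).neighborSet (.inl a)).ncard = 2 * (G.neighborSet a).ncard := by
  rw [neighborSet_inl, Set.ncard_union_eq (by simp [Set.disjoint_left]),
    Set.ncard_image_of_injective _ Sum.inl_injective,
    Set.ncard_image_of_injective _ (Sum.inr_injective.comp Sum.inl_injective)]
  ring

theorem exists_iso_starGraph_of_apply_inr_inl_eq_inr_inr (ψ : myc G ≃g myc G) {k : V}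
    (hk : ψ (.inr (.inl k)) = .inr (.inr .unit)) :
    ∃ m : ℕ, Nonempty (G ≃g _root_.starGraph m) := by
  have hc : G.IsUniversal k := by
    apply isUniversal_of_ncard_neighborSet_add_one_eq
    rw [← ncard_neighborSet_inr_inl, ← ψ.ncard_neighborSet_eq, hk, ncard_neighborSet_inr_inr]
  have hshadow : ∀ a, a ≠ k → ∃ i, ψ (.inl a) = .inr (.inl i) := fun a ha => by
    have := ψ.map_adj_iff.mpr (adj_inl_inr_inl.mpr (hc ha.symm).symm)
    rw [hk] at this
    exact exists_eq_inr_inl_of_adj_inr_inr this.symm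
  refine exists_iso_starGraph_of_isUniversal hc fun a b ha hb hab => ?_
  obtain ⟨i, hi⟩ := hshadow a ha
  obtain ⟨j, hj⟩ := hshadow b hb
  have := ψ.map_adj_iff.mpr (adj_inl_inl.mpr hab)
  rw [hi, hj] at this
  exact not_adj_inr_inl_inr_inl this

theorem ncard_neighborSet_le_one_of_apply_inl_eq_inr_inr (ψ : myc G ≃g myc G) {l a : V}
    (hl : ψ (.inl l) = .inr (.inr .unit)) (ha : ψ (.inr (.inl l)) = .inl a) :
    (G.neighborSet a).ncard ≤ 1 := by
  have hroot : ∀ c, G.Adj a c → .inl c = ψ (.inr (.inr .unit)) := fun c hac => by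
    have hpre : ψ.symm (.inl c) ∈ (myc G).neighborSet (.inr (.inl l)) := by
      rw [mem_neighborSet, ← ψ.map_adj_iff, ha, ψ.apply_symm_apply]
      exact adj_inl_inl.mpr hac
    rw [neighborSet_inr_inl] at hpre
    obtain hw | ⟨j, hlj, hj⟩ := hpre
    · rw [← hw, ψ.apply_symm_apply]
    · have := ψ.map_adj_iff.mpr (adj_inl_inl.mpr hlj)
      rw [hl, hj, ψ.apply_symm_apply] at this
      exact absurd this (by simp)
  rw [Set.ncard_le_one]
  intro c hc c' hc'
  exact Sum.inl_injective ((hroot c hc).trans (hroot c' hc').symm)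

theorem exists_iso_starGraph_of_apply_inl_eq_inr_inr (ψ : myc G ≃g myc G) {l : V}
    (hl : ψ (.inl l) = .inr (.inr .unit)) :
    ∃ m : ℕ, Nonempty (G ≃g _root_.starGraph m) := by
  obtain ⟨a, ha⟩ := exists_apply_inr_inl_eq_inl_of_apply_inl_eq_inr_inr ψ hl
  have hdeg_a := ncard_neighborSet_le_one_of_apply_inl_eq_inr_inr ψ hl ha
  have hdeg_shadow := ψ.ncard_neighborSet_eq (.inr (.inl l))
  have hdeg_root := ψ.ncard_neighborSet_eq (.inl l)
  rw [ha, ncard_neighborSet_inl, ncard_neighborSet_inr_inl] at hdeg_shadow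
  rw [hl, ncard_neighborSet_inr_inr, ncard_neighborSet_inl] at hdeg_root
  have hc : G.IsUniversal l := isUniversal_of_ncard_neighborSet_add_one_eq (by omega)
  refine exists_iso_starGraph_of_isUniversal hc fun b b' hb hb' hbb' => G.ne_of_adj hbb' ?_
  have hcompl : ({l}ᶜ : Set V).ncard ≤ 1 := by
    rw [Set.ncard_compl, Set.ncard_singleton]
    omega
  rw [Set.ncard_le_one] at hcompl
  exact hcompl b hb b' hb'

end myc

theorem root_not_fixed_implies_star {V : Type u} [Fintype V] (G : SimpleGraph V)
    (φ : myc G ≃g myc G)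
    (h : φ (Sum.inr (Sum.inr PUnit.unit)) ≠ Sum.inr (Sum.inr PUnit.unit)) :
    ∃ m : ℕ, Nonempty (G ≃g _root_.starGraph m) := by
  rcases hx : φ.symm (.inr (.inr .unit)) with l | k | _
  · exact myc.exists_iso_starGraph_of_apply_inl_eq_inr_inr φ (by rw [← hx, φ.apply_symm_apply])
  · exact myc.exists_iso_starGraph_of_apply_inr_inl_eq_inr_inr φ (by rw [← hx, φ.apply_symm_apply])
  · exact absurd (φ.symm_apply_eq.mp hx).symm h
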